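/- Let b, k, s be natural numbers with s < 2·b + k, and let C be a finite set with |C| ≥ s + b. Then there exist subsets Q1, Q2 ⊆ C with |Q1| = s, |Q2| = s, and |Q1 ∩ Q2| < b + k. -/

import Mathlib

theorem small_quorums_fail_intersection {α : Type*} [DecidableEq α]
    (C : Finset α) (b k s : ℕ)
    (hs : s < 2 * b + k)
    (hC : C.card ≥ s + b) :
    ∃ Q1 Q2 : Finset α, Q1 ⊆ C ∧ Q2 ⊆ C ∧
      Q1.card = s ∧ Q2.card = s ∧ (Q1 ∩ Q2).card < b + k := by
  obtain ⟨Q1, hQ1C, hQ1card⟩ := C.exists_subset_card_eq (n := s) (by omega)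
  set D := C \ Q1 with hD
  have hDcard : D.card ≥ b := by
    have h1 : D.card = C.card - Q1.card := Finset.card_sdiff_of_subset hQ1C
    have h2 := Finset.card_le_card hQ1C
    omega
  set m := min s D.card with hm
  obtain ⟨B, hBD, hBcard⟩ := D.exists_subset_card_eq (n := m) (by omega)
  obtain ⟨A, hAQ1, hAcard⟩ := Q1.exists_subset_card_eq (n := s - m) (by omega)
  have hdisj : Disjoint A B := by
    refine Finset.disjoint_left.mpr fun x hxA hxB => ?_
    exact (Finset.mem_sdiff.mp (hBD hxB)).2 (hAQ1 hxA)
  refine ⟨Q1, A ∪ B, hQ1C, ?_, hQ1card, ?_, ?_⟩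
  · exact Finset.union_subset (hAQ1.trans hQ1C) (hBD.trans (Finset.sdiff_subset))
  · rw [Finset.card_union_of_disjoint hdisj]; omega
  · have hsub : Q1 ∩ (A ∪ B) ⊆ A := by
      intro x hx
      rcases Finset.mem_inter.mp hx with ⟨hx1, hx2⟩
      rcases Finset.mem_union.mp hx2 with h | h
      · exact h
      · exact absurd hx1 (Finset.mem_sdiff.mp (hBD h)).2
    have := Finset.card_le_card hsub
    omega
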